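/- (Energy balance for circuit model 1.) Let A_C ∈ ℝ^{n×n_C}, A_R ∈ ℝ^{n×n_R}, A_L ∈ ℝ^{n×n_L}, A_V ∈ ℝ^{n×n_V}, A_I ∈ ℝ^{n×n_I} be real matrices. Let q : ℝ^{n_C} → ℝ^{n_C} and φ : ℝ^{n_L} → ℝ^{n_L} be bijections, let V_C, V_L be differentiable functions with ∇V_C = q⁻¹ and ∇V_L = φ⁻¹, and let g : ℝ^{n_R} → ℝ^{n_R} be continuous with ⟪g(u_R), u_R⟫ ≥ 0 for all u_R. Let i_s : [t₀,t₁] → ℝ^{n_I} and v_s : [t₀,t₁] → ℝ^{n_V} be continuous, and let q_C, φ_L, e, j_V be differentiable functions on [t₀,t₁] (with values in ℝ^{n_C}, ℝ^{n_L}, ℝ^n, ℝ^{n_V}) satisfying for all t: A_C q̇_C(t) + A_R g(A_Rᵀ e(t)) + A_L φ⁻¹(φ_L(t)) + A_V j_V(t) + A_I i_s(t) = 0; φ̇_L(t) = A_Lᵀ e(t); A_Vᵀ e(t) = v_s(t); and A_Cᵀ e(t) = q⁻¹(q_C(t)). Then with H(t) := V_C(q_C(t)) + V_L(φ_L(t))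 one has H(t₁) − H(t₀) ≤ ∫_{t₀}^{t₁} ( −i_s(t)ᵀ A_Iᵀ e(t) − v_s(t)ᵀ j_V(t) ) dt. -/

import Mathlib

/-!
Multiplying Kirchhoff's current law by the node potentials `e` (Tellegen's theorem) turns the
rate of change `q⁻¹(q_C)·q̇_C + φ⁻¹(φ_L)·φ̇_L = (A_Cᵀ e)·q̇_C + φ⁻¹(φ_L)·(A_Lᵀ e)` of the stored
energy into the supplied power `−i_s·(A_Iᵀ e) − v_s·j_V` minus the power
`g(A_Rᵀ e)·(A_Rᵀ e) ≥ 0` dissipated in the resistors. So `H'` is bounded by the supplied power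
pointwise, and integrating gives the energy balance.
-/

open Matrix MeasureTheory

protected theorem ContinuousOn.dotProduct {X ι R : Type*} [TopologicalSpace X] [Fintype ι]
    [TopologicalSpace R] [NonUnitalNonAssocSemiring R] [IsTopologicalSemiring R]
    {s : Set X} {f g : X → ι → R} (hf : ContinuousOn f s) (hg : ContinuousOn g s) :
    ContinuousOn (fun x => f x ⬝ᵥ g x) s :=
  (continuous_fst.dotProduct continuous_snd).comp_continuousOn (hf.prodMk hg)

theorem DifferentiableAt.hasDerivAt_comp_of_fderiv_eq_dotProduct {ι : Type*} [Fintype ι]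
    {V : (ι → ℝ) → ℝ} {x : ℝ → ι → ℝ} {x' G : ι → ℝ} {t : ℝ}
    (hV : DifferentiableAt ℝ V (x t)) (hG : ∀ w, fderiv ℝ V (x t) w = G ⬝ᵥ w)
    (hx : HasDerivAt x x' t) : HasDerivAt (fun s => V (x s)) (G ⬝ᵥ x') t := by
  simpa [hG, Function.comp_def] using hV.hasFDerivAt.comp_hasDerivAt t hx

theorem tellegen_power_balance {R ι C Rs L V I : Type*} [CommRing R] [Fintype ι] [Fintype C]
    [Fintype Rs] [Fintype L] [Fintype V] [Fintype I]
    (AC : Matrix ι C R) (AR : Matrix ι Rs R) (AL : Matrix ι L R) (AV : Matrix ι V R)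
    (AI : Matrix ι I R) (e : ι → R) (iC : C → R) (iR : Rs → R) (iL : L → R) (iV : V → R)
    (iI : I → R) (hKCL : AC *ᵥ iC + AR *ᵥ iR + AL *ᵥ iL + AV *ᵥ iV + AI *ᵥ iI = 0) :
    (ACᵀ *ᵥ e) ⬝ᵥ iC + iL ⬝ᵥ (ALᵀ *ᵥ e) =
      -(iR ⬝ᵥ (ARᵀ *ᵥ e)) - iI ⬝ᵥ (AIᵀ *ᵥ e) - (AVᵀ *ᵥ e) ⬝ᵥ iV := by
  have h := congrArg (e ⬝ᵥ ·) hKCL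
  simp only [dotProduct_add, dotProduct_mulVec, ← mulVec_transpose, dotProduct_zero] at h
  rw [dotProduct_comm iL, dotProduct_comm iR, dotProduct_comm iI]
  linear_combination h

theorem circuit_model1_energy_balance_general {n nC nR nL nV nI : ℕ}
    (AC : Matrix (Fin n) (Fin nC) ℝ) (AR : Matrix (Fin n) (Fin nR) ℝ)
    (AL : Matrix (Fin n) (Fin nL) ℝ) (AV : Matrix (Fin n) (Fin nV) ℝ)
    (AI : Matrix (Fin n) (Fin nI) ℝ)
    (q : (Fin nC → ℝ) → (Fin nC → ℝ)) (φ : (Fin nL → ℝ) → (Fin nL → ℝ))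
    (VC : (Fin nC → ℝ) → ℝ) (VL : (Fin nL → ℝ) → ℝ)
    (hVC : Differentiable ℝ VC) (hVL : Differentiable ℝ VL)
    (hVCgrad : ∀ qc w, fderiv ℝ VC qc w = Function.invFun q qc ⬝ᵥ w)
    (hVLgrad : ∀ φl w, fderiv ℝ VL φl w = Function.invFun φ φl ⬝ᵥ w)
    (g : (Fin nR → ℝ) → (Fin nR → ℝ))
    (hgacc : ∀ uR, 0 ≤ g uR ⬝ᵥ uR)
    (t₀ t₁ : ℝ) (ht : t₀ ≤ t₁)
    (is : ℝ → Fin nI → ℝ) (vs : ℝ → Fin nV → ℝ)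
    (his : ContinuousOn is (Set.Icc t₀ t₁)) (hvs : ContinuousOn vs (Set.Icc t₀ t₁))
    (qC : ℝ → Fin nC → ℝ) (φL : ℝ → Fin nL → ℝ)
    (e : ℝ → Fin n → ℝ) (jV : ℝ → Fin nV → ℝ)
    (qC' : ℝ → Fin nC → ℝ) (φL' : ℝ → Fin nL → ℝ)
    (hqC : ∀ t ∈ Set.Icc t₀ t₁, HasDerivAt qC (qC' t) t)
    (hφL : ∀ t ∈ Set.Icc t₀ t₁, HasDerivAt φL (φL' t) t)
    (he : ∀ t ∈ Set.Icc t₀ t₁, DifferentiableAt ℝ e t)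
    (hjV : ∀ t ∈ Set.Icc t₀ t₁, DifferentiableAt ℝ jV t)
    (hKCL : ∀ t ∈ Set.Icc t₀ t₁,
      AC.mulVec (qC' t) + AR.mulVec (g (AR.transpose.mulVec (e t))) +
        AL.mulVec (Function.invFun φ (φL t)) + AV.mulVec (jV t) +
        AI.mulVec (is t) = 0)
    (hflux : ∀ t ∈ Set.Icc t₀ t₁, φL' t = AL.transpose.mulVec (e t))
    (hvolt : ∀ t ∈ Set.Icc t₀ t₁, AV.transpose.mulVec (e t) = vs t)
    (hcharge : ∀ t ∈ Set.Icc t₀ t₁,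
      AC.transpose.mulVec (e t) = Function.invFun q (qC t)) :
    (VC (qC t₁) + VL (φL t₁)) - (VC (qC t₀) + VL (φL t₀)) ≤
      ∫ t in t₀..t₁,
        (-(is t ⬝ᵥ AI.transpose.mulVec (e t)) - vs t ⬝ᵥ jV t) := by
  have hH : ∀ t ∈ Set.Icc t₀ t₁, HasDerivAt (fun s => VC (qC s) + VL (φL s))
      (Function.invFun q (qC t) ⬝ᵥ qC' t + Function.invFun φ (φL t) ⬝ᵥ φL' t) t :=
    fun t ht => ((hVC (qC t)).hasDerivAt_comp_of_fderiv_eq_dotProduct (hVCgrad _) (hqC t ht)).add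
      ((hVL (φL t)).hasDerivAt_comp_of_fderiv_eq_dotProduct (hVLgrad _) (hφL t ht))
  have hH_le_power : ∀ t ∈ Set.Icc t₀ t₁,
      Function.invFun q (qC t) ⬝ᵥ qC' t + Function.invFun φ (φL t) ⬝ᵥ φL' t ≤
        -(is t ⬝ᵥ AIᵀ *ᵥ e t) - vs t ⬝ᵥ jV t := by
    intro t ht
    rw [← hcharge t ht, hflux t ht, tellegen_power_balance _ _ _ _ _ _ _ _ _ _ _ (hKCL t ht),
      hvolt t ht]
    linarith [hgacc (ARᵀ *ᵥ e t)]
  have hpower : ContinuousOn (fun t => -(is t ⬝ᵥ AIᵀ *ᵥ e t) - vs t ⬝ᵥ jV t)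
      (Set.Icc t₀ t₁) := by
    have hec : ContinuousOn e (Set.Icc t₀ t₁) := fun t ht =>
      (he t ht).continuousAt.continuousWithinAt
    have hjVc : ContinuousOn jV (Set.Icc t₀ t₁) := fun t ht =>
      (hjV t ht).continuousAt.continuousWithinAt
    exact (his.dotProduct ((continuous_const.matrix_mulVec continuous_id).comp_continuousOn
      hec)).neg.sub (hvs.dotProduct hjVc)
  exact intervalIntegral.sub_le_integral_of_hasDeriv_right_of_le ht
    (fun t ht => (hH t ht).continuousAt.continuousWithinAt)
    (fun t ht => (hH t (Set.Ioo_subset_Icc_self ht)).hasDerivWithinAt) hpower.integrableOn_Icc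
    (fun t ht => hH_le_power t (Set.Ioo_subset_Icc_self ht))

/-- Energy balance for circuit model 1 (charge/flux-oriented MNA):
along any solution of the circuit equations, the Hamiltonian
`H = V_C(q_C) + V_L(φ_L)` satisfies
`H(t₁) − H(t₀) ≤ ∫ (−i_sᵀ A_Iᵀ e − v_sᵀ j_V)`. -/
theorem circuit_model1_energy_balance {n nC nR nL nV nI : ℕ}
    (AC : Matrix (Fin n) (Fin nC) ℝ) (AR : Matrix (Fin n) (Fin nR) ℝ)
    (AL : Matrix (Fin n) (Fin nL) ℝ) (AV : Matrix (Fin n) (Fin nV) ℝ)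
    (AI : Matrix (Fin n) (Fin nI) ℝ)
    (q : (Fin nC → ℝ) → (Fin nC → ℝ)) (φ : (Fin nL → ℝ) → (Fin nL → ℝ))
    (hq : Function.Bijective q) (hφ : Function.Bijective φ)
    (VC : (Fin nC → ℝ) → ℝ) (VL : (Fin nL → ℝ) → ℝ)
    (hVC : Differentiable ℝ VC) (hVL : Differentiable ℝ VL)
    (hVCgrad : ∀ qc w, fderiv ℝ VC qc w = Function.invFun q qc ⬝ᵥ w)
    (hVLgrad : ∀ φl w, fderiv ℝ VL φl w = Function.invFun φ φl ⬝ᵥ w)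
    (g : (Fin nR → ℝ) → (Fin nR → ℝ)) (hg : Continuous g)
    (hgacc : ∀ uR, 0 ≤ g uR ⬝ᵥ uR)
    (t₀ t₁ : ℝ) (ht : t₀ ≤ t₁)
    (is : ℝ → Fin nI → ℝ) (vs : ℝ → Fin nV → ℝ)
    (his : ContinuousOn is (Set.Icc t₀ t₁)) (hvs : ContinuousOn vs (Set.Icc t₀ t₁))
    (qC : ℝ → Fin nC → ℝ) (φL : ℝ → Fin nL → ℝ)
    (e : ℝ → Fin n → ℝ) (jV : ℝ → Fin nV → ℝ)
    (qC' : ℝ → Fin nC → ℝ) (φL' : ℝ → Fin nL → ℝ)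
    (hqC : ∀ t ∈ Set.Icc t₀ t₁, HasDerivAt qC (qC' t) t)
    (hφL : ∀ t ∈ Set.Icc t₀ t₁, HasDerivAt φL (φL' t) t)
    (he : ∀ t ∈ Set.Icc t₀ t₁, DifferentiableAt ℝ e t)
    (hjV : ∀ t ∈ Set.Icc t₀ t₁, DifferentiableAt ℝ jV t)
    (hKCL : ∀ t ∈ Set.Icc t₀ t₁,
      AC.mulVec (qC' t) + AR.mulVec (g (AR.transpose.mulVec (e t))) +
        AL.mulVec (Function.invFun φ (φL t)) + AV.mulVec (jV t) +
        AI.mulVec (is t) = 0)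
    (hflux : ∀ t ∈ Set.Icc t₀ t₁, φL' t = AL.transpose.mulVec (e t))
    (hvolt : ∀ t ∈ Set.Icc t₀ t₁, AV.transpose.mulVec (e t) = vs t)
    (hcharge : ∀ t ∈ Set.Icc t₀ t₁,
      AC.transpose.mulVec (e t) = Function.invFun q (qC t)) :
    (VC (qC t₁) + VL (φL t₁)) - (VC (qC t₀) + VL (φL t₀)) ≤
      ∫ t in t₀..t₁,
        (-(is t ⬝ᵥ AI.transpose.mulVec (e t)) - vs t ⬝ᵥ jV t) :=
  circuit_model1_energy_balance_general AC AR AL AV AI q φ VC VL hVC hVL hVCgrad hVLgrad g hgacc t₀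
    t₁ ht is vs his hvs qC φL e jV qC' φL' hqC hφL he hjV hKCL hflux hvolt hcharge
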